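/- arXiv:2202.10747 — 4 statements merged into one kernel-verified Lean document; each statement's English description precedes it below -/
import Mathlib

section
/- Let G and H be signed weighted graphs on the same finite vertex set V, and let β ≥ 0. Suppose d_cut(G⁺,H⁺) ≤ β and d_cut(G⁻,H⁻) ≤ β, where G⁺,H⁺ (resp. G⁻,H⁻) denote the graphs induced on the positive (resp. negative) weights. Then for every clustering 𝒞 of V one has |dis(𝒞,H) − dis(𝒞,G)| ≤ 6β. -/
open Finset

/-- `pairSum w S T = Σ_{u ∈ S, v ∈ T, u ≠ v} w u v`. -/
noncomputable def pairSum {V : Type*} [Fintype V] [DecidableEq V] (w : V → V → ℝ) (S T : Finset V) : ℝ :=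
  ∑ u ∈ S, ∑ v ∈ T, if u = v then 0 else w u v

/-- Disagreement of the clustering `C` with respect to the signed weighted graph with
positive weights `wp` and negative weights `wn`: the sum of negative weights over unordered
pairs inside clusters plus the sum of positive weights over unordered pairs between
different clusters. -/
noncomputable def disW {V : Type*} [Fintype V] [DecidableEq V] (wp wn : V → V → ℝ)
    {k : ℕ} (C : Fin k → Finset V) : ℝ :=
  (∑ i, (1 / 2) * pairSum wn (C i) (C i)) +
    ∑ i, ∑ j, if i < j then pairSum wp (C i) (C j) else 0

/-! Both disagreements are read off the `k × k` matrices `e i j = pairSum (H - G) (C i) (C j)`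
of the clustering: the negative part contributes half the diagonal of `e⁻`, and, by symmetry,
the positive part half of the total minus the diagonal of `e⁺`. The cut hypothesis bounds every
block sum `∑ i ∈ s, ∑ j ∈ t, e i j` by `β`. Averaging the square block sums over all
`s ⊆ Fin k` counts each off-diagonal entry a quarter of the time and each diagonal entry
half of the time, so the total plus the diagonal is at most `4β` and the diagonal at
most `5β`; the difference of disagreements is then at most `5β / 2 + (2β + 4β) / 2`. -/

section CutNorm

variable {ι : Type*} [Fintype ι] [DecidableEq ι]

theorem card_filter_pair_subset (i j : ι) :
    #{I : Finset ι | {i, j} ⊆ I} = 2 ^ (Fintype.card ι - #{i, j}) := by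
  rw [← card_univ, ← card_Icc_finset (subset_univ _)]
  congr 1; ext I; simp

theorem four_mul_two_pow_card_sub_card_pair (i j : ι) :
    4 * (2 : ℝ) ^ (Fintype.card ι - #{i, j})
      = 2 ^ Fintype.card ι + if i = j then 2 ^ Fintype.card ι else 0 := by
  rw [← pow_sub_mul_pow (2 : ℝ) (card_le_univ {i, j})]
  split_ifs with h
  · subst h
    simp only [mem_singleton, insert_eq_of_mem, card_singleton, pow_one]
    ring
  · rw [card_pair h]; ring

theorem four_mul_sum_finset_sum_sum (e : ι → ι → ℝ) :
    4 * ∑ I : Finset ι, ∑ i ∈ I, ∑ j ∈ I, e i j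
      = 2 ^ Fintype.card ι * (∑ i, ∑ j, e i j + ∑ i, e i i) := by
  have hcount (i j : ι) : ∑ I : Finset ι, (if {i, j} ⊆ I then e i j else 0)
      = 2 ^ (Fintype.card ι - #{i, j}) * e i j := by
    rw [← sum_filter, sum_const, card_filter_pair_subset, nsmul_eq_mul]
    push_cast; ring
  calc 4 * ∑ I : Finset ι, ∑ i ∈ I, ∑ j ∈ I, e i j
      = 4 * ∑ I : Finset ι, ∑ i, ∑ j, (if {i, j} ⊆ I then e i j else 0) := by
        simp only [insert_subset_iff, singleton_subset_iff, ite_and, sum_ite_irrel,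
          sum_const_zero, Fintype.sum_ite_mem]
    _ = ∑ i, ∑ j, 4 * 2 ^ (Fintype.card ι - #{i, j}) * e i j := by
        rw [sum_comm]
        simp only [hcount, mul_sum, mul_assoc, sum_comm (γ := Finset ι)]
    _ = _ := by
        simp only [four_mul_two_pow_card_sub_card_pair, add_mul, ite_mul, zero_mul,
          sum_add_distrib, sum_ite_eq, mem_univ, if_true, mul_add, mul_sum]

theorem abs_sum_add_sum_diag_le {e : ι → ι → ℝ} {β : ℝ}
    (h : ∀ s t : Finset ι, |∑ i ∈ s, ∑ j ∈ t, e i j| ≤ β) :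
    |∑ i, ∑ j, e i j + ∑ i, e i i| ≤ 4 * β := by
  have hpos : (0 : ℝ) < 2 ^ Fintype.card ι := by positivity
  have hsum : |∑ I : Finset ι, ∑ i ∈ I, ∑ j ∈ I, e i j| ≤ 2 ^ Fintype.card ι * β :=
    calc _ ≤ ∑ I : Finset ι, |∑ i ∈ I, ∑ j ∈ I, e i j| := abs_sum_le_sum_abs _ _
      _ ≤ ∑ _I : Finset ι, β := sum_le_sum fun I _ => h I I
      _ = 2 ^ Fintype.card ι * β := by simp [Fintype.card_finset]
  refine le_of_mul_le_mul_left ?_ hpos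
  calc 2 ^ Fintype.card ι * |∑ i, ∑ j, e i j + ∑ i, e i i|
      = |4 * ∑ I : Finset ι, ∑ i ∈ I, ∑ j ∈ I, e i j| := by
        rw [four_mul_sum_finset_sum_sum, abs_mul, abs_of_pos hpos]
    _ ≤ 4 * (2 ^ Fintype.card ι * β) := by
        rw [abs_mul, abs_of_pos four_pos]
        gcongr
    _ = 2 ^ Fintype.card ι * (4 * β) := by ring

theorem abs_sum_diag_le {e : ι → ι → ℝ} {β : ℝ}
    (h : ∀ s t : Finset ι, |∑ i ∈ s, ∑ j ∈ t, e i j| ≤ β) : |∑ i, e i i| ≤ 5 * β :=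
  calc |∑ i, e i i| = |(∑ i, ∑ j, e i j + ∑ i, e i i) - ∑ i, ∑ j, e i j| := by ring_nf
    _ ≤ |∑ i, ∑ j, e i j + ∑ i, e i i| + |∑ i, ∑ j, e i j| := abs_sub _ _
    _ ≤ 4 * β + β := add_le_add (abs_sum_add_sum_diag_le h) (h univ univ)
    _ = 5 * β := by ring

end CutNorm

theorem sum_sum_ite_lt_of_symm {ι : Type*} [Fintype ι] [LinearOrder ι] {a : ι → ι → ℝ}
    (ha : ∀ i j, a i j = a j i) :
    ∑ i, ∑ j, (if i < j then a i j else 0) = (∑ i, ∑ j, a i j - ∑ i, a i i) / 2 := by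
  have hsplit (i j : ι) : a i j = (if i < j then a i j else 0) + (if j < i then a j i else 0)
      + if i = j then a i j else 0 := by
    rcases lt_trichotomy i j with h | rfl | h
    · simp [h, h.not_gt, h.ne]
    · simp
    · simp [h, h.not_gt, h.ne', ha i j]
  have hlower : ∑ i, ∑ j, (if j < i then a j i else 0)
      = ∑ i, ∑ j, (if i < j then a i j else 0) := sum_comm
  have htotal := congrArg (fun f : ι → ι → ℝ => ∑ i, ∑ j, f i j) (funext₂ hsplit)
  simp only [sum_add_distrib, hlower, sum_ite_eq, mem_univ, if_true] at htotal
  linarith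

section PairSum

variable {V : Type*} [Fintype V] [DecidableEq V]

theorem pairSum_comm {w : V → V → ℝ}
    (hw : ∀ u v, w u v = w v u) (S T : Finset V) : pairSum w S T = pairSum w T S := by
  unfold pairSum
  rw [sum_comm]
  refine sum_congr rfl fun v _ => sum_congr rfl fun u _ => ?_
  simp only [eq_comm (a := v), hw v u]

theorem pairSum_biUnion {ι : Type*} (w : V → V → ℝ)
    {s t : Finset ι} {C D : ι → Finset V} (hC : (s : Set ι).PairwiseDisjoint C)
    (hD : (t : Set ι).PairwiseDisjoint D) :
    pairSum w (s.biUnion C) (t.biUnion D) = ∑ i ∈ s, ∑ j ∈ t, pairSum w (C i) (D j) := by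
  unfold pairSum
  simp only [sum_biUnion hC, sum_biUnion hD]
  exact sum_congr rfl fun i _ => sum_comm

open Function in
theorem abs_sum_sum_pairSum_sub_le {ι : Type*} {w w' : V → V → ℝ} {β : ℝ} (hcut : ∀ S T : Finset V, |pairSum w S T - pairSum w' S T| ≤ β)
    {C : ι → Finset V} (hC : Pairwise (Disjoint on C)) (s t : Finset ι) :
    |∑ i ∈ s, ∑ j ∈ t, (pairSum w (C i) (C j) - pairSum w' (C i) (C j))| ≤ β := by
  simpa only [pairSum_biUnion w (hC.set_pairwise s) (hC.set_pairwise t),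
    pairSum_biUnion w' (hC.set_pairwise s) (hC.set_pairwise t), sum_sub_distrib] using
    hcut (s.biUnion C) (t.biUnion C)

theorem disW_eq {wp : V → V → ℝ} (wn : V → V → ℝ)
    (hwp : ∀ u v, wp u v = wp v u) {k : ℕ} (C : Fin k → Finset V) :
    disW wp wn C = (∑ i, pairSum wn (C i) (C i) + ∑ i, ∑ j, pairSum wp (C i) (C j)
      - ∑ i, pairSum wp (C i) (C i)) / 2 := by
  rw [disW, sum_sum_ite_lt_of_symm fun i j => pairSum_comm hwp (C i) (C j), ← mul_sum]
  ring

end PairSum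

theorem stmt0_general {V : Type*} [Fintype V] [DecidableEq V]
    (Gp Gn Hp Hn : V → V → ℝ) (β : ℝ) (hβ : 0 ≤ β)
    (hGpsymm : ∀ u v, Gp u v = Gp v u)
    (hHpsymm : ∀ u v, Hp u v = Hp v u)
    (hcutp : ∀ S T : Finset V, |pairSum Gp S T - pairSum Hp S T| ≤ β)
    (hcutn : ∀ S T : Finset V, |pairSum Gn S T - pairSum Hn S T| ≤ β)
    {k : ℕ} (C : Fin k → Finset V)
    (hdisj : ∀ i j, i ≠ j → Disjoint (C i) (C j)) :
    |disW Hp Hn C - disW Gp Gn C| ≤ 6 * β := by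
  have hp := abs_sum_sum_pairSum_sub_le (fun S T => (abs_sub_comm _ _).trans_le (hcutp S T)) hdisj
  have hn := abs_sum_sum_pairSum_sub_le (fun S T => (abs_sub_comm _ _).trans_le (hcutn S T)) hdisj
  have hdiagn := abs_le.mp (abs_sum_diag_le hn)
  have htotalp := abs_le.mp (hp univ univ)
  have hdiagp := abs_le.mp (abs_sum_add_sum_diag_le hp)
  simp only [sum_sub_distrib] at hdiagn htotalp hdiagp
  rw [disW_eq Hn hHpsymm, disW_eq Gn hGpsymm, abs_le]
  constructor <;> linarith

theorem stmt0 {V : Type*} [Fintype V] [DecidableEq V]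
    (Gp Gn Hp Hn : V → V → ℝ) (β : ℝ) (hβ : 0 ≤ β)
    (hGpsymm : ∀ u v, Gp u v = Gp v u) (hGnsymm : ∀ u v, Gn u v = Gn v u)
    (hHpsymm : ∀ u v, Hp u v = Hp v u) (hHnsymm : ∀ u v, Hn u v = Hn v u)
    (hGpnn : ∀ u v, 0 ≤ Gp u v) (hGnnn : ∀ u v, 0 ≤ Gn u v)
    (hHpnn : ∀ u v, 0 ≤ Hp u v) (hHnnn : ∀ u v, 0 ≤ Hn u v)
    (hcutp : ∀ S T : Finset V, |pairSum Gp S T - pairSum Hp S T| ≤ β)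
    (hcutn : ∀ S T : Finset V, |pairSum Gn S T - pairSum Hn S T| ≤ β)
    {k : ℕ} (C : Fin k → Finset V)
    (hdisj : ∀ i j, i ≠ j → Disjoint (C i) (C j))
    (hcover : ∀ v : V, ∃ i, v ∈ C i)
    (hne : ∀ i, (C i).Nonempty) :
    |disW Hp Hn C - disW Gp Gn C| ≤ 6 * β :=
  stmt0_general Gp Gn Hp Hn β hβ hGpsymm hHpsymm hcutp hcutn C hdisj
end

section
/- Let k be a natural number and f : {1,…,k} × {1,…,k} → ℝ a symmetric function (f(i,j) = f(j,i)). Then there exists a subset S ⊆ {1,…,k} such that |Σ_{i∈S, j∉S} f(i,j)| ≥ (1/2)·|Σ_{1≤i<j≤k} f(i,j)|. -/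
open Finset

lemma countSep {k : ℕ} (i j : Fin k) (hij : i ≠ j) :
    ((univ : Finset (Finset (Fin k))).filter (fun S => i ∈ S ∧ j ∉ S)).card
      = 2 ^ (k - 2) := by
  have : ((univ : Finset (Finset (Fin k))).filter (fun S => i ∈ S ∧ j ∉ S)).card
      = (univ : Finset (Finset {x : Fin k // x ≠ i ∧ x ≠ j})).card := by
    apply Finset.card_bij' (fun S _ => S.subtype (fun x => x ≠ i ∧ x ≠ j))
      (fun T _ => insert i (T.map (Function.Embedding.subtype _)))
    · intro S hS
      simp only [mem_filter, mem_univ, true_and] at hS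
      rw [Finset.subtype_map]
      ext x
      simp only [Finset.mem_insert, Finset.mem_filter]
      constructor
      · rintro (rfl | ⟨hx, _⟩) <;> [exact hS.1; exact hx]
      · intro hx
        by_cases hxi : x = i
        · exact Or.inl hxi
        · by_cases hxj : x = j
          · exact absurd (hxj ▸ hx) hS.2
          · exact Or.inr ⟨hx, hxi, hxj⟩
    · intro T _
      ext ⟨x, hx⟩
      simp [Finset.mem_subtype, hx.1, hx.2]
    · intro S hS; exact mem_univ _
    · intro T _
      simp only [mem_filter, mem_univ, true_and]
      constructor
      · exact Finset.mem_insert_self _ _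
      · intro hj
        rcases Finset.mem_insert.1 hj with h | h
        · exact hij h.symm
        · rcases Finset.mem_map.1 h with ⟨⟨x, hx⟩, -, hxj⟩
          exact hx.2 hxj
  rw [this, ← Fintype.card, Fintype.card_finset, Fintype.card_subtype]
  congr 1
  rw [Finset.filter_and]
  have h1 : (univ.filter (fun x : Fin k => x ≠ i)) = univ.erase i := by
    ext x; simp [Finset.mem_erase]
  have h2 : (univ.filter (fun x : Fin k => x ≠ j)) = univ.erase j := by
    ext x; simp [Finset.mem_erase]
  rw [h1, h2, Finset.erase_inter, Finset.univ_inter,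
    Finset.card_erase_of_mem (Finset.mem_erase.2 ⟨hij, mem_univ _⟩),
    Finset.card_erase_of_mem (mem_univ _), Finset.card_univ, Fintype.card_fin]
  omega

theorem stmt3 (k : ℕ) (f : Fin k → Fin k → ℝ) (hsymm : ∀ i j, f i j = f j i) :
    ∃ S : Finset (Fin k),
      (1 / 2) * |∑ i, ∑ j, if i < j then f i j else 0| ≤
        |∑ i ∈ S, ∑ j ∈ Sᶜ, f i j| := by
  set T : ℝ := ∑ i, ∑ j, if i < j then f i j else 0 with hT
  by_cases hT0 : T = 0
  · exact ⟨∅, by rw [hT0]; simp⟩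
  have hk : 2 ≤ k := by
    by_contra hk
    apply hT0
    apply Finset.sum_eq_zero; intro i _
    apply Finset.sum_eq_zero; intro j _
    have : ¬ i < j := by
      have := i.2; have := j.2; omega
    simp [this]
  -- rewrite each cut sum as a double sum over all indices
  have e1 : ∀ S : Finset (Fin k), ∑ i ∈ S, ∑ j ∈ Sᶜ, f i j
      = ∑ i, ∑ j, if i ∈ S ∧ j ∉ S then f i j else 0 := by
    intro S
    have hS : S = univ.filter (· ∈ S) := by ext x; simp
    have hSc : Sᶜ = univ.filter (· ∉ S) := by ext x; simp
    calc ∑ i ∈ S, ∑ j ∈ Sᶜ, f i j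
        = ∑ i ∈ univ.filter (· ∈ S), ∑ j ∈ univ.filter (· ∉ S), f i j := by
          rw [← hS, ← hSc]
      _ = ∑ i, ∑ j, if i ∈ S ∧ j ∉ S then f i j else 0 := by
          rw [Finset.sum_filter]
          refine Finset.sum_congr rfl fun i _ => ?_
          rw [Finset.sum_filter]
          split
          · refine Finset.sum_congr rfl fun j _ => ?_
            simp_all
          · rw [Finset.sum_eq_zero]
            intro j _; simp_all
  -- the key averaging identity
  have key : ∑ S : Finset (Fin k), ∑ i ∈ S, ∑ j ∈ Sᶜ, f i j
      = 2 ^ (k - 1) * T := by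
    calc ∑ S : Finset (Fin k), ∑ i ∈ S, ∑ j ∈ Sᶜ, f i j
        = ∑ S : Finset (Fin k), ∑ i, ∑ j, if i ∈ S ∧ j ∉ S then f i j else 0 := by
          exact Finset.sum_congr rfl fun S _ => e1 S
      _ = ∑ i, ∑ j, ∑ S : Finset (Fin k), if i ∈ S ∧ j ∉ S then f i j else 0 := by
          rw [Finset.sum_comm]
          refine Finset.sum_congr rfl fun i _ => ?_
          rw [Finset.sum_comm]
      _ = ∑ i, ∑ j, if i = j then 0 else (2 ^ (k - 2) : ℝ) * f i j := by
          refine Finset.sum_congr rfl fun i _ => Finset.sum_congr rfl fun j _ => ?_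
          rw [Finset.sum_ite, Finset.sum_const, Finset.sum_const_zero, add_zero,
            nsmul_eq_mul]
          by_cases hij : i = j
          · subst hij
            simp
          · rw [countSep i j hij, if_neg hij]
            push_cast
            ring
      _ = 2 ^ (k - 2) * ∑ i, ∑ j, if i = j then 0 else f i j := by
          rw [Finset.mul_sum]
          refine Finset.sum_congr rfl fun i _ => ?_
          rw [Finset.mul_sum]
          refine Finset.sum_congr rfl fun j _ => ?_
          split <;> simp
      _ = 2 ^ (k - 2) * (2 * T) := by
          congr 1
          have split : ∀ i j : Fin k, (if i = j then (0:ℝ) else f i j)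
              = (if i < j then f i j else 0) + (if j < i then f i j else 0) := by
            intro i j
            rcases lt_trichotomy i j with h | h | h
            · simp [h, asymm h, h.ne]
            · simp [h]
            · simp [h, asymm h, (ne_of_gt h)]
          calc ∑ i, ∑ j, (if i = j then (0:ℝ) else f i j)
              = (∑ i, ∑ j, if i < j then f i j else 0)
                + ∑ i, ∑ j, if j < i then f i j else 0 := by
                rw [← Finset.sum_add_distrib]
                refine Finset.sum_congr rfl fun i _ => ?_
                rw [← Finset.sum_add_distrib]
                exact Finset.sum_congr rfl fun j _ => split i j
            _ = T + T := by
                congr 1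
                rw [Finset.sum_comm]
                refine Finset.sum_congr rfl fun i _ => Finset.sum_congr rfl fun j _ => ?_
                rw [hsymm]
            _ = 2 * T := by ring
      _ = 2 ^ (k - 1) * T := by
          rw [← mul_assoc]
          congr 1
          rw [mul_comm, ← pow_succ']
          congr 1
          omega
  -- pigeonhole
  by_contra hcon
  push_neg at hcon
  have habs : |∑ S : Finset (Fin k), ∑ i ∈ S, ∑ j ∈ Sᶜ, f i j|
      ≤ ∑ S : Finset (Fin k), |∑ i ∈ S, ∑ j ∈ Sᶜ, f i j| :=
    Finset.abs_sum_le_sum_abs _ _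
  have hlt : ∑ S : Finset (Fin k), |∑ i ∈ S, ∑ j ∈ Sᶜ, f i j|
      < ∑ _S : Finset (Fin k), (1 / 2) * |T| := by
    apply Finset.sum_lt_sum_of_nonempty Finset.univ_nonempty
    intro S _
    exact hcon S
  have hcard : ∑ _S : Finset (Fin k), (1 / 2 : ℝ) * |T| = 2 ^ k * ((1 / 2) * |T|) := by
    rw [Finset.sum_const, nsmul_eq_mul, Finset.card_univ, Fintype.card_finset,
      Fintype.card_fin]
    push_cast
    ring
  have hpow : (2 : ℝ) ^ k * (1 / 2) = 2 ^ (k - 1) := by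
    have : k = (k - 1) + 1 := by omega
    rw [this, pow_succ]
    ring_nf
    congr 1
    omega
  have hTpos : 0 < |T| := abs_pos.2 hT0
  rw [key] at habs
  rw [abs_mul, abs_of_pos (by positivity : (0:ℝ) < 2 ^ (k-1))] at habs
  have : (2:ℝ) ^ (k - 1) * |T| < 2 ^ (k - 1) * |T| := by
    calc (2:ℝ) ^ (k - 1) * |T| ≤ _ := habs
      _ < 2 ^ k * ((1 / 2) * |T|) := by rw [← hcard]; exact hlt
      _ = 2 ^ (k - 1) * |T| := by rw [← hpow]; ring
  exact lt_irrefl _ this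
end

section
/- Let G be an unweighted complete signed graph on a finite vertex set V, let λ = 1/10 and η = 1/100, and let τ ≥ 0. Let C ⊆ V be an η-clean set with |C| ≥ 10τ, let A ⊆ V satisfy A ∩ C = ∅, and let u ∈ C. Then u is not 4λ-hesitant with respect to A with slack τ; that is, it is NOT the case that both |N⁺(u) ∩ A| > (1−4λ)|A| − τ and |N⁺(u) ∩ (V∖A)| < 4λ|A| + τ. -/
open Finset

variable {V : Type*} [Fintype V] [DecidableEq V]

/-- The set of positive neighbors of `v`. -/
def Nplus (pos : V → V → Prop) [DecidableRel pos] (v : V) : Finset V :=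
  Finset.univ.filter fun u => pos v u

/-- A node `v` is `lam`-good with respect to a set `C`. -/
def IsGood (pos : V → V → Prop) [DecidableRel pos] (lam : ℝ) (v : V) (C : Finset V) : Prop :=
  (1 - lam) * (C.card : ℝ) ≤ ((Nplus pos v ∩ C).card : ℝ) ∧
    ((Nplus pos v ∩ (Finset.univ \ C)).card : ℝ) ≤ lam * (C.card : ℝ)

/-- A set `C` is `η`-clean if every node of `C` is `η`-good with respect to `C`. -/
def IsClean (pos : V → V → Prop) [DecidableRel pos] (η : ℝ) (C : Finset V) : Prop :=
  ∀ v ∈ C, IsGood pos η v C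

/-- The cluster of `v` in the clustering given by the labeling `c`. -/
def cluster (c : V → ℕ) (v : V) : Finset V :=
  Finset.univ.filter fun u => c u = c v

/-- The disagreement of the clustering given by the labeling `c` on the unweighted complete
signed graph with positive edges `pos`: the number of negative edges inside clusters plus
the number of positive edges between different clusters. -/
noncomputable def disU (pos : V → V → Prop) [DecidableRel pos] (c : V → ℕ) : ℝ :=
  ((Finset.univ.filter fun p : V × V => p.1 ≠ p.2 ∧
      ((c p.1 = c p.2 ∧ ¬ pos p.1 p.2) ∨ (c p.1 ≠ c p.2 ∧ pos p.1 p.2))).card : ℝ) / 2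

theorem stmt11 {V : Type*} [Fintype V] [DecidableEq V]
    (pos : V → V → Prop) [DecidableRel pos]
    (hsymm : ∀ u v, pos u v → pos v u) (hirr : ∀ v, ¬ pos v v)
    (lam η τ : ℝ) (hlam : lam = 1 / 10) (hη : η = 1 / 100) (hτ : 0 ≤ τ)
    (C A : Finset V) (hclean : IsClean pos η C)
    (hsize : 10 * τ ≤ (C.card : ℝ))
    (hdisj : A ∩ C = ∅) (u : V) (hu : u ∈ C) :
    ¬ ((1 - 4 * lam) * (A.card : ℝ) - τ < ((Nplus pos u ∩ A).card : ℝ) ∧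
        ((Nplus pos u ∩ (Finset.univ \ A)).card : ℝ) < 4 * lam * (A.card : ℝ) + τ) := by
  rintro ⟨h1, h2⟩
  obtain ⟨hg1, hg2⟩ := hclean u hu
  have hAC : A ⊆ Finset.univ \ C := by
    intro x hx
    simp only [mem_sdiff, mem_univ, true_and]
    intro hxC
    exact absurd hdisj (by
      apply Finset.ne_empty_of_mem (a := x)
      exact Finset.mem_inter.mpr ⟨hx, hxC⟩)
  have hCA : C ⊆ Finset.univ \ A := by
    intro x hx
    simp only [mem_sdiff, mem_univ, true_and]
    intro hxA
    exact absurd hdisj (by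
      apply Finset.ne_empty_of_mem (a := x)
      exact Finset.mem_inter.mpr ⟨hxA, hx⟩)
  have hc1 : ((Nplus pos u ∩ A).card : ℝ) ≤ ((Nplus pos u ∩ (Finset.univ \ C)).card : ℝ) := by
    exact_mod_cast Finset.card_le_card (Finset.inter_subset_inter (Finset.Subset.refl _) hAC)
  have hc2 : ((Nplus pos u ∩ C).card : ℝ) ≤ ((Nplus pos u ∩ (Finset.univ \ A)).card : ℝ) := by
    exact_mod_cast Finset.card_le_card (Finset.inter_subset_inter (Finset.Subset.refl _) hCA)
  subst hlam hη
  linarith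
end

section
/- Let G be an unweighted complete signed graph on a finite vertex set V, let 0 ≤ η < 1, and let C₁, C₂ ⊆ V be disjoint η-clean sets. Then for any v ∈ C₁ and z ∈ C₂ we have |N⁺(z) ∩ N⁺(v)| ≤ η(|C₁| + |C₂|). -/
open Finset

variable {V : Type*} [Fintype V] [DecidableEq V]

theorem stmt15 {V : Type*} [Fintype V] [DecidableEq V]
    (pos : V → V → Prop) [DecidableRel pos]
    (hsymm : ∀ u v, pos u v → pos v u) (hirr : ∀ v, ¬ pos v v)
    (η : ℝ) (hη0 : 0 ≤ η) (hη : η < 1)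
    (C₁ C₂ : Finset V) (hdisj : Disjoint C₁ C₂)
    (hclean₁ : IsClean pos η C₁) (hclean₂ : IsClean pos η C₂)
    (v z : V) (hv : v ∈ C₁) (hz : z ∈ C₂) :
    ((Nplus pos z ∩ Nplus pos v).card : ℝ) ≤ η * ((C₁.card : ℝ) + (C₂.card : ℝ)) := by
  set A := Nplus pos z ∩ Nplus pos v
  have h1 : A ∩ C₁ ⊆ Nplus pos z ∩ (Finset.univ \ C₂) := by
    intro x hx
    simp only [A, mem_inter, mem_sdiff, mem_univ, true_and] at hx ⊢
    exact ⟨hx.1.1, fun hx2 => Finset.disjoint_left.mp hdisj hx.2 hx2⟩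
  have h2 : A \ C₁ ⊆ Nplus pos v ∩ (Finset.univ \ C₁) := by
    intro x hx
    simp only [A, mem_sdiff, mem_inter, mem_univ, true_and] at hx ⊢
    exact ⟨hx.1.2, hx.2⟩
  have hcard : (A.card : ℝ) ≤ ((A ∩ C₁).card : ℝ) + ((A \ C₁).card : ℝ) := by
    have := Finset.card_inter_add_card_sdiff A C₁
    push_cast [← this]; ring_nf; rfl
  have hb1 : ((A ∩ C₁).card : ℝ) ≤ η * C₂.card := by
    calc ((A ∩ C₁).card : ℝ) ≤ ((Nplus pos z ∩ (Finset.univ \ C₂)).card : ℝ) := by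
          exact_mod_cast Finset.card_le_card h1
      _ ≤ η * C₂.card := (hclean₂ z hz).2
  have hb2 : ((A \ C₁).card : ℝ) ≤ η * C₁.card := by
    calc ((A \ C₁).card : ℝ) ≤ ((Nplus pos v ∩ (Finset.univ \ C₁)).card : ℝ) := by
          exact_mod_cast Finset.card_le_card h2
      _ ≤ η * C₁.card := (hclean₁ v hv).2
  nlinarith
end
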